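/- If C[□] is an injective context in a specification (S,Σ,F), then for all patterns φᵢ, φᵢ' of the appropriate sort, F ⊨ C[φᵢ] ∧ C[φᵢ'] → C[φᵢ ∧ φᵢ']. -/

import Mathlib

namespace ML

structure Signature where
  S : Type
  Sym : Type
  n : Sym → ℕ
  arg : (f : Sym) → Fin (n f) → S
  res : Sym → S

inductive Pattern (σ : Signature) : σ.S → Type
  | var (s : σ.S) (x : ℕ) : Pattern σ s
  | app (f : σ.Sym) (args : ∀ i : Fin (σ.n f), Pattern σ (σ.arg f i)) : Pattern σ (σ.res f)
  | neg {s : σ.S} (φ : Pattern σ s) : Pattern σ s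
  | and {s : σ.S} (φ ψ : Pattern σ s) : Pattern σ s
  | ex {s : σ.S} (s' : σ.S) (x : ℕ) (φ : Pattern σ s) : Pattern σ s

namespace Pattern

variable {σ : Signature}

def or {s : σ.S} (φ ψ : Pattern σ s) : Pattern σ s := .neg (.and (.neg φ) (.neg ψ))

def imp {s : σ.S} (φ ψ : Pattern σ s) : Pattern σ s := .or (.neg φ) ψ

def piff {s : σ.S} (φ ψ : Pattern σ s) : Pattern σ s := .and (.imp φ ψ) (.imp ψ φ)

def all {s : σ.S} (s' : σ.S) (x : ℕ) (φ : Pattern σ s) : Pattern σ s :=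
  .neg (.ex s' x (.neg φ))

end Pattern

/-- Free variables of a pattern, as sort-variable pairs. -/
def FV {σ : Signature} : {s : σ.S} → Pattern σ s → Set ((s : σ.S) × ℕ)
  | _, .var s x => {⟨s, x⟩}
  | _, .app _ args => ⋃ i, FV (args i)
  | _, .neg φ => FV φ
  | _, .and φ ψ => FV φ ∪ FV ψ
  | _, .ex s' x φ => FV φ \ {⟨s', x⟩}

structure Model (σ : Signature) where
  carrier : σ.S → Type
  nonempty : ∀ s, Nonempty (carrier s)
  interp : (f : σ.Sym) → (∀ i : Fin (σ.n f), carrier (σ.arg f i)) → Set (carrier (σ.res f))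

def Val {σ : Signature} (M : Model σ) := (s : σ.S) → ℕ → M.carrier s

open Classical in
noncomputable def Val.upd {σ : Signature} {M : Model σ} (ρ : Val M) (s : σ.S) (x : ℕ)
    (a : M.carrier s) : Val M :=
  fun s' y => if h : s' = s ∧ y = x then cast (congrArg M.carrier h.1).symm a else ρ s' y

/-- Pattern evaluation: the set of elements matching the pattern. -/
noncomputable def eval {σ : Signature} {M : Model σ} :
    {s : σ.S} → Pattern σ s → Val M → Set (M.carrier s)
  | _, .var s x, ρ => {ρ s x}
  | _, .app f args, ρ =>
      { b | ∃ a : ∀ i, M.carrier (σ.arg f i), (∀ i, a i ∈ eval (args i) ρ) ∧ b ∈ M.interp f a }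
  | _, .neg φ, ρ => (eval φ ρ)ᶜ
  | _, .and φ ψ, ρ => eval φ ρ ∩ eval ψ ρ
  | _, .ex s' x φ, ρ => ⋃ a : M.carrier s', eval φ (ρ.upd s' x a)

def Sat {σ : Signature} (M : Model σ) {s : σ.S} (φ : Pattern σ s) : Prop :=
  ∀ ρ : Val M, eval φ ρ = Set.univ

def Valid {σ : Signature} {s : σ.S} (φ : Pattern σ s) : Prop :=
  ∀ M : Model σ, Sat M φ

end ML
namespace ML

variable {σ : Signature}

/-- The argument sort of a unary (definedness) symbol. -/
def arg1 (d : σ.Sym) (hn : σ.n d = 1) : σ.S := σ.arg d ⟨0, by omega⟩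

/-- Definedness applied to a pattern: `⌈φ⌉`. -/
noncomputable def ceil (d : σ.Sym) (hn : σ.n d = 1) (φ : Pattern σ (arg1 d hn)) :
    Pattern σ (σ.res d) :=
  .app d (fun j => cast (by
    have hj : j = (⟨0, by omega⟩ : Fin (σ.n d)) := Fin.ext (by have := j.isLt; omega)
    rw [hj]; rfl) φ)

/-- The definedness axiom pattern `⌈x⌉`. -/
noncomputable def defAx (d : σ.Sym) (hn : σ.n d = 1) : Pattern σ (σ.res d) :=
  ceil d hn (.var (arg1 d hn) 0)

/-- Totality `⌊φ⌋ ≡ ¬⌈¬φ⌉`. -/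
noncomputable def floor (d : σ.Sym) (hn : σ.n d = 1) (φ : Pattern σ (arg1 d hn)) :
    Pattern σ (σ.res d) :=
  .neg (ceil d hn (.neg φ))

/-- Equality pattern `φ = φ' ≡ ⌊φ ↔ φ'⌋`. -/
noncomputable def eqP (d : σ.Sym) (hn : σ.n d = 1) (φ φ' : Pattern σ (arg1 d hn)) :
    Pattern σ (σ.res d) :=
  floor d hn (φ.piff φ')

/-- Membership pattern `x ∈ φ ≡ ⌈x ∧ φ⌉`. -/
noncomputable def mem (d : σ.Sym) (hn : σ.n d = 1) (x : ℕ) (φ : Pattern σ (arg1 d hn)) :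
    Pattern σ (σ.res d) :=
  ceil d hn ((Pattern.var (arg1 d hn) x).and φ)

/-- The context `σ(φ₁,…,□,…,φₙ)` with `ψ` plugged into the `i`-th position. -/
def plug (f : σ.Sym) (i : Fin (σ.n f)) (args : ∀ j : Fin (σ.n f), Pattern σ (σ.arg f j))
    (ψ : Pattern σ (σ.arg f i)) : Pattern σ (σ.res f) :=
  .app f (fun j => if h : j = i then cast (by rw [h]) ψ else args j)

/-- Bound variables of a pattern. -/
def BV : {s : σ.S} → Pattern σ s → Set ((s : σ.S) × ℕ)
  | _, .var _ _ => ∅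
  | _, .app _ args => ⋃ i, BV (args i)
  | _, .neg φ => BV φ
  | _, .and φ ψ => BV φ ∪ BV ψ
  | _, .ex s' x φ => BV φ ∪ {⟨s', x⟩}

open Classical in
/-- Substitution `φ[ψ/x]` of pattern `ψ` for variable `x` of sort `t` (capture-free
provided the bound variables of `φ` are disjoint from the free variables of `ψ`). -/
noncomputable def subst : {s : σ.S} → Pattern σ s → (t : σ.S) → ℕ → Pattern σ t → Pattern σ s
  | _, .var s' y, t, x, ψ =>
      if h : s' = t ∧ y = x then cast (by rw [h.1]) ψ else .var s' y
  | _, .app f args, t, x, ψ => .app f (fun i => subst (args i) t x ψ)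
  | _, .neg φ, t, x, ψ => .neg (subst φ t x ψ)
  | _, .and φ₁ φ₂, t, x, ψ => .and (subst φ₁ t x ψ) (subst φ₂ t x ψ)
  | _, .ex s' y φ, t, x, ψ =>
      if s' = t ∧ y = x then .ex s' y φ else .ex s' y (subst φ t x ψ)

/-- Semantic entailment from a set of axiom patterns. -/
def Entails (F : Set ((s : σ.S) × Pattern σ s)) {s : σ.S} (φ : Pattern σ s) : Prop :=
  ∀ M : Model σ, (∀ ψ ∈ F, Sat M ψ.2) → Sat M φ

/-- A pattern is functional in `M` iff it evaluates to a singleton under every valuation. -/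
def Functional (M : Model σ) {s : σ.S} (φ : Pattern σ s) : Prop :=
  ∀ ρ : Val M, ∃ a : M.carrier s, eval φ ρ = {a}

end ML

/-!
Let `b ∈ C[φ] ∩ C[φ']` be witnessed by argument tuples `a` and `a'`. Evaluate the injectivity
axiom under the valuation sending `x ↦ a i` and `y ↦ a' i`: as `x` and `y` do not occur in the
other arguments, `b` matches both `C[x]` and `C[y]` there, so `C[x ∧ y]` yields one tuple `c`
with `c i = a i = a' i`, and `c` witnesses `b ∈ C[φ ∧ φ']`.
-/

namespace ML

variable {σ : Signature} {M : Model σ}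

theorem Val.upd_apply_self (ρ : Val M) (s : σ.S) (x : ℕ) (a : M.carrier s) :
    ρ.upd s x a s x = a := by
  simp only [Val.upd, and_self, dif_pos, cast_eq]

theorem Val.upd_apply_of_ne (ρ : Val M) {s : σ.S} {x : ℕ} (a : M.carrier s)
    {p : (_ : σ.S) × ℕ} (hp : p ≠ ⟨s, x⟩) : ρ.upd s x a p.1 p.2 = ρ p.1 p.2 :=
  dif_neg fun h => hp (Sigma.ext h.1 (heq_of_eq h.2))

theorem eval_congr : ∀ {s : σ.S} (φ : Pattern σ s) {ρ ρ' : Val M},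
    (∀ p ∈ FV φ, ρ p.1 p.2 = ρ' p.1 p.2) → eval φ ρ = eval φ ρ'
  | _, .var s x, _, _, h => by
      simp only [eval, h ⟨s, x⟩ rfl]
  | _, .app f args, _, _, h => by
      simp only [eval,
        fun j => eval_congr (args j) fun p hp => h p (Set.mem_iUnion.2 ⟨j, hp⟩)]
  | _, .neg φ, _, _, h => by
      simp only [eval, eval_congr φ h]
  | _, .and φ ψ, _, _, h => by
      simp only [eval, eval_congr φ fun p hp => h p (Or.inl hp),
        eval_congr ψ fun p hp => h p (Or.inr hp)]
  | _, .ex s' z φ, _, _, h => by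
      refine Set.iUnion_congr fun a => eval_congr φ fun p hp => ?_
      by_cases hpz : p = ⟨s', z⟩
      · subst hpz
        simp only [Val.upd_apply_self]
      · rw [Val.upd_apply_of_ne _ _ hpz, Val.upd_apply_of_ne _ _ hpz]
        exact h p ⟨hp, hpz⟩

theorem eval_upd_of_not_mem_FV {s t : σ.S} {φ : Pattern σ s} {x : ℕ} (hx : ⟨t, x⟩ ∉ FV φ)
    (ρ : Val M) (a : M.carrier t) : eval φ (ρ.upd t x a) = eval φ ρ :=
  eval_congr φ fun _ hp => Val.upd_apply_of_ne ρ a fun h => hx (h ▸ hp)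

theorem sat_imp_iff {s : σ.S} {φ ψ : Pattern σ s} :
    Sat M (φ.imp ψ) ↔ ∀ ρ : Val M, eval φ ρ ⊆ eval ψ ρ := by
  simp only [Sat, Pattern.imp, Pattern.or, eval, Set.eq_univ_iff_forall, Set.mem_compl_iff,
    Set.mem_inter_iff, not_and, not_not, Set.subset_def]

theorem mem_eval_plug {f : σ.Sym} {i : Fin (σ.n f)}
    {args : ∀ j : Fin (σ.n f), Pattern σ (σ.arg f j)} {ψ : Pattern σ (σ.arg f i)}
    {ρ : Val M} {b : M.carrier (σ.res f)} :
    b ∈ eval (plug f i args ψ) ρ ↔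
      ∃ a : ∀ j, M.carrier (σ.arg f j),
        (∀ j, j ≠ i → a j ∈ eval (args j) ρ) ∧ a i ∈ eval ψ ρ ∧ b ∈ M.interp f a := by
  simp only [plug, eval, Set.mem_ofPred_eq]
  constructor
  · rintro ⟨a, ha, hb⟩
    refine ⟨a, fun j hj => ?_, ?_, hb⟩
    · simpa only [dif_neg hj] using ha j
    · simpa only [dif_pos, cast_eq] using ha i
  · rintro ⟨a, ha, hai, hb⟩
    refine ⟨a, fun j => ?_, hb⟩
    by_cases hj : j = i
    · subst hj
      simpa only [dif_pos, cast_eq] using hai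
    · simpa only [dif_neg hj] using ha j hj

variable (f : σ.Sym) (i : Fin (σ.n f)) (args : ∀ j : Fin (σ.n f), Pattern σ (σ.arg f j))

def injectivityPattern (x y : ℕ) : Pattern σ (σ.res f) :=
  ((plug f i args (.var _ x)).and (plug f i args (.var _ y))).imp
    (plug f i args ((Pattern.var _ x).and (.var _ y)))

variable {f i args}

theorem exists_common_arg_of_sat_injectivityPattern {x y : ℕ} (hxy : x ≠ y)
    (hx : ∀ j, j ≠ i → (⟨σ.arg f i, x⟩ : (_ : σ.S) × ℕ) ∉ FV (args j))
    (hy : ∀ j, j ≠ i → (⟨σ.arg f i, y⟩ : (_ : σ.S) × ℕ) ∉ FV (args j))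
    (hinj : Sat M (injectivityPattern f i args x y)) {ρ : Val M}
    {a a' : ∀ j, M.carrier (σ.arg f j)} {b : M.carrier (σ.res f)}
    (ha : ∀ j, j ≠ i → a j ∈ eval (args j) ρ) (ha' : ∀ j, j ≠ i → a' j ∈ eval (args j) ρ)
    (hb : b ∈ M.interp f a) (hb' : b ∈ M.interp f a') :
    ∃ c : ∀ j, M.carrier (σ.arg f j),
      (∀ j, j ≠ i → c j ∈ eval (args j) ρ) ∧ c i = a i ∧ c i = a' i ∧ b ∈ M.interp f c := by
  set ρ' := (ρ.upd _ x (a i)).upd _ y (a' i)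
  have hρ'x : ρ' _ x = a i :=
    (Val.upd_apply_of_ne _ _ fun h => hxy (eq_of_heq (Sigma.mk.inj h).2)).trans
      (Val.upd_apply_self ..)
  have hρ'y : ρ' _ y = a' i := Val.upd_apply_self ..
  have hargs : ∀ j, j ≠ i → eval (args j) ρ' = eval (args j) ρ := fun j hj => by
    rw [eval_upd_of_not_mem_FV (hy j hj), eval_upd_of_not_mem_FV (hx j hj)]
  have hmem := sat_imp_iff.1 hinj ρ' ⟨
    mem_eval_plug.2 ⟨a, fun j hj => hargs j hj ▸ ha j hj, hρ'x.symm, hb⟩,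
    mem_eval_plug.2 ⟨a', fun j hj => hargs j hj ▸ ha' j hj, hρ'y.symm, hb'⟩⟩
  obtain ⟨c, hc, ⟨hcx, hcy⟩, hcb⟩ := mem_eval_plug.1 hmem
  exact ⟨c, fun j hj => hargs j hj ▸ hc j hj, hcx.trans hρ'x, hcy.trans hρ'y, hcb⟩

end ML

/-- if `C[□]` is an injective context in `(S,Σ,F)`, then for all
patterns `φᵢ, φᵢ'`, `F ⊨ C[φᵢ] ∧ C[φᵢ'] → C[φᵢ ∧ φᵢ']`. -/
theorem stmt9 {σ : ML.Signature} (F : Set ((s : σ.S) × ML.Pattern σ s))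
    (f : σ.Sym) (i : Fin (σ.n f))
    (args : ∀ j : Fin (σ.n f), ML.Pattern σ (σ.arg f j)) (x y : ℕ) (hxy : x ≠ y)
    (hx : ∀ j, j ≠ i → (⟨σ.arg f i, x⟩ : (t : σ.S) × ℕ) ∉ ML.FV (args j))
    (hy : ∀ j, j ≠ i → (⟨σ.arg f i, y⟩ : (t : σ.S) × ℕ) ∉ ML.FV (args j))
    (hinj : ML.Entails F
      (((ML.plug f i args (ML.Pattern.var (σ.arg f i) x)).and
          (ML.plug f i args (ML.Pattern.var (σ.arg f i) y))).imp
        (ML.plug f i args ((ML.Pattern.var (σ.arg f i) x).and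
          (ML.Pattern.var (σ.arg f i) y)))))
    (φ φ' : ML.Pattern σ (σ.arg f i)) :
    ML.Entails F (((ML.plug f i args φ).and (ML.plug f i args φ')).imp
      (ML.plug f i args (φ.and φ'))) := by
  intro M hF
  refine ML.sat_imp_iff.2 fun ρ b ⟨hb, hb'⟩ => ?_
  obtain ⟨a, ha, hai, hab⟩ := ML.mem_eval_plug.1 hb
  obtain ⟨a', ha', hai', hab'⟩ := ML.mem_eval_plug.1 hb'
  obtain ⟨c, hc, hca, hca', hcb⟩ :=
    ML.exists_common_arg_of_sat_injectivityPattern hxy hx hy (hinj M hF) ha ha' hab hab'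
  exact ML.mem_eval_plug.2 ⟨c, hc, ⟨hca ▸ hai, hca' ▸ hai'⟩, hcb⟩
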